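/- Let s>0, y_1>0, y_2>0, and ξ_1,ξ_2∈ℕ_0. Define d(y,m)=y^m Γ(2s)/Γ(2s+m), D(y_1,y_2;ξ_1,ξ_2)=d(y_1,ξ_1)d(y_2,ξ_2), and for 1≤k≤n, φ_s(k,n) = (1/k)·Γ(n+1)Γ(n-k+2s)/(Γ(n-k+1)Γ(n+2s)). Then ∫_0^{y_1}(dα/α)(1-α/y_1)^{2s-1}[D(y_1-α,y_2+α;ξ_1,ξ_2)-D(y_1,y_2;ξ_1,ξ_2)] + ∫_0^{y_2}(dα/α)(1-α/y_2)^{2s-1}[D(y_1+α,y_2-α;ξ_1,ξ_2)-D(y_1,y_2;ξ_1,ξ_2)] = Σ_{k=1}^{ξ_1} φ_s(k,ξ_1)[D(y_1,y_2;ξ_1-k,ξ_2+k)-D(y_1,y_2;ξ_1,ξ_2)] + Σ_{k=1}^{ξ_2} φ_s(k,ξ_2)[D(y_1,y_2;ξ_1+k,ξ_2-k)-D(y_1,y_2;ξ_1,ξ_2)]. -/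

import Mathlib

/-!
Write `D(y₁ - a, y₂ + a) - D(y₁, y₂)` as a gain part `(y₁ - a)^ξ₁ ((y₂ + a)^ξ₂ - y₂^ξ₂)`, expanded
binomially in `a`, plus a loss part `y₂^ξ₂ ((y₁ - a)^ξ₁ - y₁^ξ₁)`, expanded as a geometric sum. Both
are divisible by `a`, so the singular factor `1/a` of the Lévy kernel cancels and every term becomes
a Beta integral `∫₀^y (1 - a/y)^(2s-1) a^j (y - a)^p da`. The gain terms are exactly the rates
`φ_s(k, ξ₂)` times `D(ξ₁ + k, ξ₂ - k)`, the loss part is `-(∑_{m<ξ₁} 1/(2s+m)) D`, and the same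
computation at `y = 1` identifies this harmonic sum with the total rate `∑_k φ_s(k, ξ₁)`.
-/

open MeasureTheory Real

noncomputable section

namespace HeatModel

/-- Single-site duality function `d(y,m) = y^m Γ(2s)/Γ(2s+m)`. -/
def dFun (s : ℝ) (y : ℝ) (m : ℕ) : ℝ := y ^ m * Real.Gamma (2 * s) / Real.Gamma (2 * s + m)

/-- Two-site duality function. -/
def DFun (s : ℝ) (y₁ y₂ : ℝ) (ξ₁ ξ₂ : ℕ) : ℝ := dFun s y₁ ξ₁ * dFun s y₂ ξ₂

/-- The jump rates `φ_s(k,n)` of the harmonic dual process. -/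
def phi (s : ℝ) (k n : ℕ) : ℝ :=
  if 1 ≤ k ∧ k ≤ n then
    (1 / (k : ℝ)) * (Real.Gamma ((n : ℝ) + 1) * Real.Gamma ((n : ℝ) - (k : ℝ) + 2 * s)) /
      (Real.Gamma ((n : ℝ) - (k : ℝ) + 1) * Real.Gamma ((n : ℝ) + 2 * s))
  else 0

open Finset
open scoped Nat

theorem add_pow_sub_pow_eq_mul_sum {R : Type*} [CommRing R] (x a : R) (n : ℕ) :
    (x + a) ^ n - x ^ n = a * ∑ k ∈ Icc 1 n, n.choose k * a ^ (k - 1) * x ^ (n - k) := by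
  rw [add_comm x a, add_pow, Nat.range_succ_eq_Icc_zero, Icc_eq_cons_Ioc n.zero_le, sum_cons,
    ← Icc_add_one_left_eq_Ioc, zero_add, mul_sum]
  simp only [pow_zero, one_mul, Nat.choose_zero_right, Nat.cast_one, mul_one, Nat.sub_zero,
    add_sub_cancel_left]
  refine sum_congr rfl fun k hk => ?_
  rw [← mul_pow_sub_one (by grind : k ≠ 0) a]
  ring

theorem sub_pow_mul_add_pow_sub_pow_eq_mul_sum {R : Type*} [CommRing R] (x y a : R) (p n : ℕ) :
    (y - a) ^ p * ((x + a) ^ n - x ^ n)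
      = a * ∑ k ∈ Icc 1 n, (n.choose k * x ^ (n - k)) * (a ^ (k - 1) * (y - a) ^ p) := by
  rw [add_pow_sub_pow_eq_mul_sum, mul_left_comm, mul_sum]
  exact congrArg _ (sum_congr rfl fun k _ => by ring)

theorem sub_pow_sub_pow_eq_mul_sum {R : Type*} [CommRing R] (y a : R) (p : ℕ) :
    (y - a) ^ p - y ^ p = a * ∑ m ∈ range p, (-y ^ (p - 1 - m)) * (y - a) ^ m := by
  rw [← geom_sum₂_mul, mul_sum, sum_mul]
  exact sum_congr rfl fun m _ => by ring

theorem intervalIntegral_rpow_mul_one_sub_rpow {u v : ℝ} (hu : 0 < u) (hv : 0 < v) :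
    ∫ x in (0 : ℝ)..1, x ^ (u - 1) * (1 - x) ^ (v - 1) = ProbabilityTheory.beta u v := by
  have hcast : ((∫ x in (0 : ℝ)..1, x ^ (u - 1) * (1 - x) ^ (v - 1) : ℝ) : ℂ)
      = Complex.betaIntegral u v := by
    rw [Complex.betaIntegral, ← intervalIntegral.integral_ofReal]
    refine intervalIntegral.integral_congr fun x hx => ?_
    rw [Set.uIcc_of_le zero_le_one] at hx
    push_cast
    rw [Complex.ofReal_cpow hx.1, Complex.ofReal_cpow (sub_nonneg.2 hx.2)]
    push_cast
    rfl
  rw [ProbabilityTheory.beta_eq_betaIntegralReal u v hu hv, ← hcast, Complex.ofReal_re]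

section OneSubDivRpowKernel

variable {y β : ℝ}

theorem integrableOn_one_sub_div_rpow_mul (hy : 0 < y) (hβ : 0 < β) {f : ℝ → ℝ}
    (hf : ContinuousOn f (Set.Icc 0 y)) :
    IntegrableOn (fun a => (1 - a / y) ^ (β - 1) * f a) (Set.Ioo 0 y) := by
  have hkernel : IntervalIntegrable (fun a => (1 - a / y) ^ (β - 1)) volume 0 y := by
    have := ((intervalIntegral.intervalIntegrable_rpow' (r := β - 1) (a := 0) (b := 1)
      (by linarith)).comp_sub_left 1).comp_mul_left (c := y⁻¹)
    simpa [div_eq_inv_mul] using this.symm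
  rw [← integrableOn_Icc_iff_integrableOn_Ioo]
  exact ((intervalIntegrable_iff_integrableOn_Icc_of_le hy.le).1 hkernel).mul_continuousOn hf
    isCompact_Icc

theorem setIntegral_one_sub_div_rpow_mul_pow (hy : 0 < y) (hβ : 0 < β) (j : ℕ) :
    ∫ a in Set.Ioo 0 y, (1 - a / y) ^ (β - 1) * a ^ j
      = y ^ (j + 1) * (j ! * Gamma β / Gamma (β + j + 1)) := by
  have hsubst : ∫ a in (0 : ℝ)..y, (1 - a / y) ^ (β - 1) * a ^ j
      = y * ∫ t in (0 : ℝ)..1, (1 - y * t / y) ^ (β - 1) * (y * t) ^ j := by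
    simpa using (intervalIntegral.smul_integral_comp_mul_left
      (fun a => (1 - a / y) ^ (β - 1) * a ^ j) y (a := 0) (b := 1)).symm
  have hbeta : ∫ t in (0 : ℝ)..1, (1 - y * t / y) ^ (β - 1) * (y * t) ^ j
      = y ^ j * ∫ t in (0 : ℝ)..1, t ^ ((j + 1 : ℝ) - 1) * (1 - t) ^ (β - 1) := by
    rw [← intervalIntegral.integral_const_mul]
    refine intervalIntegral.integral_congr fun t _ => ?_
    simp only [mul_div_cancel_left₀ _ hy.ne', add_sub_cancel_right, rpow_natCast]
    ring
  rw [← integral_Ioc_eq_integral_Ioo, ← intervalIntegral.integral_of_le hy.le, hsubst, hbeta,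
    intervalIntegral_rpow_mul_one_sub_rpow (by positivity) hβ, ProbabilityTheory.beta,
    Gamma_nat_eq_factorial, add_comm _ β, ← add_assoc]
  ring

theorem setIntegral_one_sub_div_rpow_mul_pow_mul_sub_pow (hy : 0 < y) (hβ : 0 < β)
    (j p : ℕ) :
    ∫ a in Set.Ioo 0 y, (1 - a / y) ^ (β - 1) * (a ^ j * (y - a) ^ p)
      = y ^ (j + p + 1) * (j ! * Gamma (β + p) / Gamma (β + p + j + 1)) := by
  have hfold : Set.EqOn (fun a => (1 - a / y) ^ (β - 1) * (a ^ j * (y - a) ^ p))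
      (fun a => y ^ p * ((1 - a / y) ^ (β + p - 1) * a ^ j)) (Set.Ioo 0 y) := by
    intro a ha
    have hpos : 0 < 1 - a / y := by rw [sub_pos, div_lt_one hy]; exact ha.2
    have hsub : y - a = y * (1 - a / y) := by field_simp
    simp only [hsub, mul_pow, show β + p - 1 = β - 1 + p by ring, rpow_add_natCast hpos.ne']
    ring
  rw [setIntegral_congr_fun measurableSet_Ioo hfold, integral_const_mul,
    setIntegral_one_sub_div_rpow_mul_pow hy (by positivity)]
  ring

theorem setIntegral_one_sub_div_rpow_mul_sub_pow (hy : 0 < y) (hβ : 0 < β) (p : ℕ) :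
    ∫ a in Set.Ioo 0 y, (1 - a / y) ^ (β - 1) * (y - a) ^ p = y ^ (p + 1) / (β + p) := by
  have h := setIntegral_one_sub_div_rpow_mul_pow_mul_sub_pow hy hβ 0 p
  have hpos : 0 < β + p := by positivity
  simp only [pow_zero, one_mul, zero_add, Nat.factorial_zero, Nat.cast_one, Nat.cast_zero,
    add_zero, Gamma_add_one hpos.ne'] at h
  rw [h]
  field_simp

theorem setIntegral_one_sub_div_rpow_mul_sum {ι : Type*} (hy : 0 < y) (hβ : 0 < β)
    (s : Finset ι) (c : ι → ℝ) {g : ι → ℝ → ℝ} (hg : ∀ i ∈ s, ContinuousOn (g i) (Set.Icc 0 y)) :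
    ∫ a in Set.Ioo 0 y, (1 - a / y) ^ (β - 1) * ∑ i ∈ s, c i * g i a
      = ∑ i ∈ s, c i * ∫ a in Set.Ioo 0 y, (1 - a / y) ^ (β - 1) * g i a := by
  simp_rw [mul_sum, mul_left_comm _ (c _)]
  rw [integral_finsetSum s fun i hi =>
    (integrableOn_one_sub_div_rpow_mul hy hβ (hg i hi)).const_mul (c i)]
  simp_rw [integral_const_mul]

theorem integrableOn_one_sub_div_rpow_div_mul (hy : 0 < y) (hβ : 0 < β)
    {F G : ℝ → ℝ} (hG : ContinuousOn G (Set.Icc 0 y)) (hFG : ∀ a, F a = a * G a) :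
    IntegrableOn (fun a => (1 - a / y) ^ (β - 1) / a * F a) (Set.Ioo 0 y) :=
  (integrableOn_one_sub_div_rpow_mul hy hβ hG).congr_fun
    (fun a ha => by simp only [hFG a]; field_simp [ha.1.ne']) measurableSet_Ioo

theorem setIntegral_one_sub_div_rpow_div_mul {F G : ℝ → ℝ} (hFG : ∀ a, F a = a * G a) :
    ∫ a in Set.Ioo 0 y, (1 - a / y) ^ (β - 1) / a * F a
      = ∫ a in Set.Ioo 0 y, (1 - a / y) ^ (β - 1) * G a :=
  setIntegral_congr_fun measurableSet_Ioo fun a ha => by simp only [hFG a]; field_simp [ha.1.ne']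

theorem integrableOn_gain (hy : 0 < y) (hβ : 0 < β) (x : ℝ) (p n : ℕ) :
    IntegrableOn (fun a => (1 - a / y) ^ (β - 1) / a * ((y - a) ^ p * ((x + a) ^ n - x ^ n)))
      (Set.Ioo 0 y) :=
  integrableOn_one_sub_div_rpow_div_mul hy hβ (by fun_prop)
    (sub_pow_mul_add_pow_sub_pow_eq_mul_sum x y · p n)

theorem setIntegral_gain (hy : 0 < y) (hβ : 0 < β) (x : ℝ) (p n : ℕ) :
    ∫ a in Set.Ioo 0 y, (1 - a / y) ^ (β - 1) / a * ((y - a) ^ p * ((x + a) ^ n - x ^ n))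
      = ∑ k ∈ Icc 1 n, n.choose k * x ^ (n - k) *
          (y ^ (k + p) * ((k - 1)! * Gamma (β + p) / Gamma (β + p + k))) := by
  rw [setIntegral_one_sub_div_rpow_div_mul (sub_pow_mul_add_pow_sub_pow_eq_mul_sum x y · p n),
    setIntegral_one_sub_div_rpow_mul_sum hy hβ _ _ fun k _ => by fun_prop]
  refine sum_congr rfl fun k _ => ?_
  obtain ⟨k, rfl⟩ : ∃ i, k = i + 1 := ⟨k - 1, by grind⟩
  rw [setIntegral_one_sub_div_rpow_mul_pow_mul_sub_pow hy hβ, Nat.add_sub_cancel,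
    add_right_comm k p 1, Nat.cast_add_one, ← add_assoc]

theorem integrableOn_loss (hy : 0 < y) (hβ : 0 < β) (p : ℕ) :
    IntegrableOn (fun a => (1 - a / y) ^ (β - 1) / a * ((y - a) ^ p - y ^ p)) (Set.Ioo 0 y) :=
  integrableOn_one_sub_div_rpow_div_mul hy hβ (by fun_prop) (sub_pow_sub_pow_eq_mul_sum y · p)

theorem setIntegral_loss (hy : 0 < y) (hβ : 0 < β) (p : ℕ) :
    ∫ a in Set.Ioo 0 y, (1 - a / y) ^ (β - 1) / a * ((y - a) ^ p - y ^ p)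
      = -(y ^ p * ∑ m ∈ range p, 1 / (β + m)) := by
  rw [setIntegral_one_sub_div_rpow_div_mul (sub_pow_sub_pow_eq_mul_sum y · p),
    setIntegral_one_sub_div_rpow_mul_sum hy hβ _ _ fun k _ => by fun_prop, mul_sum,
    ← sum_neg_distrib]
  refine sum_congr rfl fun m _ => ?_
  rw [setIntegral_one_sub_div_rpow_mul_sub_pow hy hβ,
    show y ^ p = y ^ (p - 1 - m) * y ^ (m + 1) by rw [← pow_add]; congr 1; grind]
  ring

end OneSubDivRpowKernel

theorem phi_eq_choose_mul {s : ℝ} {k n : ℕ} (hk : 1 ≤ k) (hkn : k ≤ n) :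
    phi s k n = n.choose k * ((k - 1)! * Gamma (2 * s + (n - k : ℕ)) / Gamma (2 * s + n)) := by
  obtain ⟨k, rfl⟩ : ∃ i, k = i + 1 := ⟨k - 1, by grind⟩
  have hchoose := Nat.choose_mul_factorial_mul_factorial hkn
  have hsub : (n : ℝ) - (k + 1 : ℕ) = (n - (k + 1) : ℕ) := by push_cast [Nat.cast_sub hkn]; ring
  rw [phi, if_pos ⟨hk, hkn⟩, hsub, Gamma_nat_eq_factorial, Gamma_nat_eq_factorial,
    Nat.add_sub_cancel, add_comm (n : ℝ) (2 * s), add_comm _ (2 * s), ← hchoose]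
  push_cast [Nat.factorial_succ]
  field_simp

theorem sum_phi {s : ℝ} (hs : 0 < s) (n : ℕ) :
    ∑ k ∈ Icc 1 n, phi s k n = ∑ m ∈ range n, 1 / (2 * s + m) := by
  have hβ : 0 < 2 * s := by positivity
  have hexpand : ∀ a : ℝ, -((1 - a) ^ n - 1 ^ n)
      = a * ∑ k ∈ Icc 1 n, (n.choose k : ℝ) * (a ^ (k - 1) * (1 - a) ^ (n - k)) := by
    intro a
    have h := add_pow_sub_pow_eq_mul_sum (1 - a) a n
    rw [sub_add_cancel] at h
    rw [neg_sub, h]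
    exact congrArg _ (sum_congr rfl fun k _ => by ring)
  calc ∑ k ∈ Icc 1 n, phi s k n
      = ∑ k ∈ Icc 1 n, (n.choose k : ℝ) * ∫ a in Set.Ioo (0 : ℝ) 1,
          (1 - a / 1) ^ (2 * s - 1) * (a ^ (k - 1) * (1 - a) ^ (n - k)) := by
        refine sum_congr rfl fun k hk => ?_
        obtain ⟨hk1, hkn⟩ := mem_Icc.1 hk
        have hexp : 2 * s + ((n - k : ℕ) : ℝ) + ((k - 1 : ℕ) : ℝ) + 1 = 2 * s + n := by
          push_cast [Nat.cast_sub hk1, Nat.cast_sub hkn]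
          ring
        rw [phi_eq_choose_mul hk1 hkn, setIntegral_one_sub_div_rpow_mul_pow_mul_sub_pow one_pos hβ,
          one_pow, one_mul, hexp]
    _ = ∫ a in Set.Ioo 0 1, (1 - a / 1) ^ (2 * s - 1) / a * -((1 - a) ^ n - 1 ^ n) := by
        rw [setIntegral_one_sub_div_rpow_div_mul hexpand,
          setIntegral_one_sub_div_rpow_mul_sum one_pos hβ _ _ fun k _ => by fun_prop]
    _ = ∑ m ∈ range n, 1 / (2 * s + m) := by
        simp_rw [mul_neg, integral_neg, setIntegral_loss one_pos hβ, one_pow, one_mul, neg_neg]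

theorem DFun_comm (s x y : ℝ) (ξ η : ℕ) : DFun s x y ξ η = DFun s y x η ξ :=
  mul_comm _ _

theorem gain_coeff_eq_phi_mul_DFun {s : ℝ} (hs : 0 < s) (x y : ℝ) {k n : ℕ} (hk : 1 ≤ k)
    (hkn : k ≤ n) (p : ℕ) :
    Gamma (2 * s) / Gamma (2 * s + p) * (Gamma (2 * s) / Gamma (2 * s + n)) *
        (n.choose k * x ^ (n - k) *
          (y ^ (k + p) * ((k - 1)! * Gamma (2 * s + p) / Gamma (2 * s + p + k))))
      = phi s k n * DFun s y x (p + k) (n - k) := by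
  have hΓ : ∀ m : ℕ, Gamma (2 * s + m) ≠ 0 := fun m => (Gamma_pos_of_pos (by positivity)).ne'
  rw [phi_eq_choose_mul hk hkn]
  simp only [DFun, dFun, Nat.cast_add, ← add_assoc]
  field_simp [hΓ]
  ring

theorem setIntegral_exchange {s : ℝ} (hs : 0 < s) {y₁ : ℝ} (h₁ : 0 < y₁) (y₂ : ℝ) (ξ₁ ξ₂ : ℕ) :
    ∫ a in Set.Ioo 0 y₁,
        (1 - a / y₁) ^ (2 * s - 1) / a * (DFun s (y₁ - a) (y₂ + a) ξ₁ ξ₂ - DFun s y₁ y₂ ξ₁ ξ₂)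
      = ∑ k ∈ Icc 1 ξ₂, phi s k ξ₂ * DFun s y₁ y₂ (ξ₁ + k) (ξ₂ - k)
        - (∑ m ∈ range ξ₁, 1 / (2 * s + m)) * DFun s y₁ y₂ ξ₁ ξ₂ := by
  have hβ : 0 < 2 * s := by positivity
  set c : ℕ → ℝ := fun m => Gamma (2 * s) / Gamma (2 * s + m)
  have hsplit : ∀ a, (1 - a / y₁) ^ (2 * s - 1) / a
      * (DFun s (y₁ - a) (y₂ + a) ξ₁ ξ₂ - DFun s y₁ y₂ ξ₁ ξ₂)
      = c ξ₁ * c ξ₂ * ((1 - a / y₁) ^ (2 * s - 1) / a * ((y₁ - a) ^ ξ₁ * ((y₂ + a) ^ ξ₂ - y₂ ^ ξ₂))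
        + y₂ ^ ξ₂ * ((1 - a / y₁) ^ (2 * s - 1) / a * ((y₁ - a) ^ ξ₁ - y₁ ^ ξ₁))) := by
    intro a
    simp only [c, DFun, dFun]
    ring
  simp_rw [hsplit]
  rw [integral_const_mul, integral_add (integrableOn_gain h₁ hβ _ _ _)
    ((integrableOn_loss h₁ hβ _).const_mul _), integral_const_mul, setIntegral_gain h₁ hβ,
    setIntegral_loss h₁ hβ, mul_add, mul_sum, sub_eq_add_neg]
  congr 1
  · exact sum_congr rfl fun k hk =>
      gain_coeff_eq_phi_mul_DFun hs y₂ y₁ (mem_Icc.1 hk).1 (mem_Icc.1 hk).2 ξ₁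
  · simp only [c, DFun, dFun]
    ring

/-- Local bulk duality: the Levy exchange generator acting on the continuous variables of
the duality function equals the harmonic dual generator acting on the discrete variables. -/
theorem bulk_duality (s : ℝ) (hs : 0 < s) (y₁ y₂ : ℝ) (h₁ : 0 < y₁) (h₂ : 0 < y₂)
    (ξ₁ ξ₂ : ℕ) :
    (∫ a in Set.Ioo 0 y₁,
        (1 - a / y₁) ^ (2 * s - 1) / a * (DFun s (y₁ - a) (y₂ + a) ξ₁ ξ₂ - DFun s y₁ y₂ ξ₁ ξ₂))
      + (∫ a in Set.Ioo 0 y₂,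
          (1 - a / y₂) ^ (2 * s - 1) / a * (DFun s (y₁ + a) (y₂ - a) ξ₁ ξ₂ - DFun s y₁ y₂ ξ₁ ξ₂))
    = (∑ k ∈ Finset.Icc 1 ξ₁,
        phi s k ξ₁ * (DFun s y₁ y₂ (ξ₁ - k) (ξ₂ + k) - DFun s y₁ y₂ ξ₁ ξ₂))
      + ∑ k ∈ Finset.Icc 1 ξ₂,
          phi s k ξ₂ * (DFun s y₁ y₂ (ξ₁ + k) (ξ₂ - k) - DFun s y₁ y₂ ξ₁ ξ₂) := by
  have hmirror : ∫ a in Set.Ioo 0 y₂,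
        (1 - a / y₂) ^ (2 * s - 1) / a * (DFun s (y₁ + a) (y₂ - a) ξ₁ ξ₂ - DFun s y₁ y₂ ξ₁ ξ₂)
      = ∑ k ∈ Icc 1 ξ₁, phi s k ξ₁ * DFun s y₁ y₂ (ξ₁ - k) (ξ₂ + k)
        - (∑ m ∈ range ξ₂, 1 / (2 * s + m)) * DFun s y₁ y₂ ξ₁ ξ₂ := by
    -- `DFun_comm` is a permutation lemma: simp orients every `DFun` on both sides the same way.
    simpa only [DFun_comm] using setIntegral_exchange hs h₂ y₁ ξ₂ ξ₁
  rw [setIntegral_exchange hs h₁ y₂ ξ₁ ξ₂, hmirror]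
  simp only [mul_sub, sum_sub_distrib, ← sum_mul, sum_phi hs]
  ring

end HeatModel
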